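/- Let ρ be a density matrix on a finite-dimensional complex space and O a matrix of the same size. Then the one-point Rényi-1 correlator R := tr(√ρ · O · √ρ · O†) is a nonnegative real number and satisfies the two-sided bound F(ρ, O ρ O†)² ≤ R ≤ ‖O‖∞ · F(ρ, O ρ O†). -/

import Mathlib

noncomputable section

open scoped Matrix Kronecker ComplexOrder

/-- The positive semidefinite square root of a matrix (defaults to `0` if not PSD). -/
noncomputable def matSqrt {n : Type*} [Fintype n] [DecidableEq n] (M : Matrix n n ℂ) :
    Matrix n n ℂ :=
  open scoped Classical in
  if h : M.PosSemidef then
    (h.isHermitian.eigenvectorUnitary : Matrix n n ℂ) *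
      Matrix.diagonal (((↑) : ℝ → ℂ) ∘ Real.sqrt ∘ h.isHermitian.eigenvalues) *
      (star h.isHermitian.eigenvectorUnitary : Matrix n n ℂ)
  else 0

/-- The fidelity `F(ρ, σ) = tr √(√ρ σ √ρ)` of two PSD matrices. -/
noncomputable def fidelity {n : Type*} [Fintype n] [DecidableEq n] (ρ σ : Matrix n n ℂ) : ℝ :=
  (matSqrt (matSqrt ρ * σ * matSqrt ρ)).trace.re

/-- The ℓ²→ℓ² operator norm of a complex matrix. -/
noncomputable def opNorm {m n : Type*} [Fintype m] [Fintype n] [DecidableEq n]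
    (M : Matrix m n ℂ) : ℝ :=
  ‖(Matrix.toEuclideanLin.trans LinearMap.toContinuousLinearMap) M‖

/-- Partial trace over the second tensor factor. -/
noncomputable def ptraceB {A B : Type*} [Fintype B]
    (ρ : Matrix (A × B) (A × B) ℂ) : Matrix A A ℂ :=
  Matrix.of fun a a' => ∑ b : B, ρ (a, b) (a', b)

/-!
Put `S = √ρ` and `M = S O S`. Then `S (O ρ Oᴴ) S = M Mᴴ`, so the fidelity is
`F = tr √(M Mᴴ)`, the trace norm of `M`, while `R = tr (M Oᴴ)`; with `T = √S` and `N = T O T`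
also `R = tr (N Nᴴ) ≥ 0`. Both bounds come from the polar decomposition `M = √(M Mᴴ) V` with
`‖V‖ ≤ 1` and `M Vᴴ = √(M Mᴴ)`, and from Cauchy–Schwarz for the Hilbert–Schmidt inner product
`⟨A, B⟩ = tr (A Bᴴ)`:
* writing `√(M Mᴴ) = Q Q`, `R = ⟨Q V Oᴴ, Q⟩` gives Hölder's inequality `|R| ≤ ‖O‖ F`;
* `F = tr (M Vᴴ) = ⟨N, T V T⟩` gives `F² ≤ R · tr (S V S Vᴴ)`, and a second Cauchy–Schwarz,
  `|tr (S V S Vᴴ)| ≤ ‖S V‖₂ ‖V S‖₂ ≤ ‖V‖² tr ρ`, bounds the last factor by `1`.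
-/

open scoped MatrixOrder Matrix.Norms.L2Operator

namespace Matrix

section

variable {n : Type*} [Fintype n]

lemma re_trace_nonneg {A : Matrix n n ℂ} (hA : A.PosSemidef) : 0 ≤ A.trace.re :=
  (Complex.nonneg_iff.mp hA.trace_nonneg).1

lemma re_trace_le_of_le {A B : Matrix n n ℂ} (h : A ≤ B) : A.trace.re ≤ B.trace.re := by
  have h := re_trace_nonneg (le_iff.mp h)
  rwa [trace_sub, Complex.sub_re, sub_nonneg] at h

end

variable {n : Type*} [Fintype n] [DecidableEq n]

lemma opNorm_eq_norm (O : Matrix n n ℂ) : opNorm O = ‖O‖ := by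
  rw [cstar_norm_def]; rfl

lemma matSqrt_eq_sqrt {A : Matrix n n ℂ} (hA : A.PosSemidef) : matSqrt A = CFC.sqrt A := by
  rw [CFC.sqrt_eq_real_sqrt A hA.nonneg, cfcₙ_eq_cfc, hA.1.cfc_eq, matSqrt, dif_pos hA]
  simp [IsHermitian.cfc]

lemma sqrt_eq_cfc_sqrt {A : Matrix n n ℂ} (hA : 0 ≤ A) : CFC.sqrt A = cfc Real.sqrt A := by
  rw [CFC.sqrt_eq_real_sqrt A hA, cfcₙ_eq_cfc]

lemma conjTranspose_sqrt (A : Matrix n n ℂ) : (CFC.sqrt A)ᴴ = CFC.sqrt A :=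
  (nonneg_iff_posSemidef.mp (CFC.sqrt_nonneg A)).isHermitian.eq

lemma cfc_mul_cfc (f g : ℝ → ℝ) (A : Matrix n n ℂ) :
    cfc f A * cfc g A = cfc (fun x => f x * g x) A :=
  (cfc_mul f g A ((spectrum ℝ A).toFinite.continuousOn f)
    ((spectrum ℝ A).toFinite.continuousOn g)).symm

lemma norm_trace_mul_conjTranspose_sq_le (A B : Matrix n n ℂ) :
    ‖(A * Bᴴ).trace‖ ^ 2 ≤ (A * Aᴴ).trace.re * (B * Bᴴ).trace.re := by
  let := toMatrixSeminormedAddCommGroup (1 : Matrix n n ℂ) PosSemidef.one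
  let := toMatrixInnerProductSpace (1 : Matrix n n ℂ) PosSemidef.one
  have h := norm_inner_le_norm (𝕜 := ℂ) B A
  have hA := norm_sq_eq_re_inner (𝕜 := ℂ) A
  have hB := norm_sq_eq_re_inner (𝕜 := ℂ) B
  change ‖(A * 1 * Bᴴ).trace‖ ≤ _ at h
  change _ = (A * 1 * Aᴴ).trace.re at hA
  change _ = (B * 1 * Bᴴ).trace.re at hB
  simp only [Matrix.mul_one] at h hA hB
  rw [← hA, ← hB, ← mul_pow]
  exact pow_le_pow_left₀ (norm_nonneg _) (h.trans_eq (mul_comm _ _)) 2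

lemma re_trace_conj_mul_conjTranspose_le (X C : Matrix n n ℂ) :
    (X * (C * Cᴴ) * Xᴴ).trace.re ≤ ‖C‖ ^ 2 * (X * Xᴴ).trace.re := by
  have hC : C * Cᴴ ≤ algebraMap ℝ _ (‖C‖ ^ 2) := CStarAlgebra.mul_star_le_algebraMap_norm_sq
  have h := re_trace_le_of_le (star_right_conjugate_le_conjugate hC X)
  rwa [Algebra.algebraMap_eq_smul_one, Matrix.mul_smul, Matrix.mul_one, Matrix.smul_mul,
    trace_smul, Complex.real_smul, Complex.re_ofReal_mul] at h

/-- Since `(√0)⁻¹ = 0`, this is the partial isometry `V` of the polar decomposition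
`M = √(M Mᴴ) V`. -/
def polarIsometry (M : Matrix n n ℂ) : Matrix n n ℂ :=
  cfc (fun x => (√x)⁻¹) (M * Mᴴ) * M

section Polar

variable (M : Matrix n n ℂ)

lemma conjTranspose_polarIsometry :
    M.polarIsometryᴴ = Mᴴ * cfc (fun x => (√x)⁻¹) (M * Mᴴ) := by
  rw [polarIsometry, conjTranspose_mul, ← star_eq_conjTranspose (cfc _ _),
    (cfc_predicate _ _ : IsSelfAdjoint _).star_eq]

lemma mul_conjTranspose_polarIsometry : M * M.polarIsometryᴴ = CFC.sqrt (M * Mᴴ) := by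
  have hM : 0 ≤ M * Mᴴ := (posSemidef_self_mul_conjTranspose M).nonneg
  calc M * M.polarIsometryᴴ
      = CFC.sqrt (M * Mᴴ) * CFC.sqrt (M * Mᴴ) * cfc (fun x => (√x)⁻¹) (M * Mᴴ) := by
        rw [conjTranspose_polarIsometry, ← Matrix.mul_assoc, CFC.sqrt_mul_sqrt_self _ hM]
    _ = CFC.sqrt (M * Mᴴ) := by
        simp only [sqrt_eq_cfc_sqrt hM, cfc_mul_cfc, mul_self_mul_inv]

lemma sqrt_mul_polarIsometry : CFC.sqrt (M * Mᴴ) * M.polarIsometry = M := by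
  have hM : 0 ≤ M * Mᴴ := (posSemidef_self_mul_conjTranspose M).nonneg
  set E := cfc (fun x => √x * (√x)⁻¹) (M * Mᴴ)
  have hE : (1 - E) * CFC.sqrt (M * Mᴴ) = 0 := by
    simp only [E, sub_mul, one_mul, sqrt_eq_cfc_sqrt hM, cfc_mul_cfc, mul_inv_mul_cancel, sub_self]
  -- `((1 - E) M) ((1 - E) M)ᴴ = ((1 - E) √(M Mᴴ)) (√(M Mᴴ) (1 - E)ᴴ)`
  have hEM : (1 - E) * M = 0 := by
    rw [← self_mul_conjTranspose_eq_zero, conjTranspose_mul, Matrix.mul_assoc,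
      ← Matrix.mul_assoc M, ← CFC.sqrt_mul_sqrt_self _ hM, ← Matrix.mul_assoc, ← Matrix.mul_assoc,
      hE, Matrix.zero_mul, Matrix.zero_mul]
  rw [sub_mul, one_mul, sub_eq_zero] at hEM
  rw [polarIsometry, ← Matrix.mul_assoc, sqrt_eq_cfc_sqrt hM, cfc_mul_cfc, ← hEM]

lemma norm_polarIsometry_le_one : ‖M.polarIsometry‖ ≤ 1 := by
  have hM : 0 ≤ M * Mᴴ := (posSemidef_self_mul_conjTranspose M).nonneg
  have hVV : M.polarIsometry * star M.polarIsometry = cfc (fun x => (√x)⁻¹ * √x) (M * Mᴴ) := by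
    rw [star_eq_conjTranspose]
    change cfc _ _ * M * _ = _
    rw [Matrix.mul_assoc, mul_conjTranspose_polarIsometry, sqrt_eq_cfc_sqrt hM, cfc_mul_cfc]
  have h : ‖M.polarIsometry * star M.polarIsometry‖ ≤ 1 := by
    rw [hVV]
    refine norm_cfc_le zero_le_one fun x _ => ?_
    rcases eq_or_ne √x 0 with h | h <;> simp [h]
  rw [CStarRing.norm_self_mul_star, ← sq] at h
  exact (pow_le_one_iff_of_nonneg (norm_nonneg _) two_ne_zero).mp h

end Polar

lemma norm_trace_mul_le_of_eq_mul {M Q V : Matrix n n ℂ} (hQ : Qᴴ = Q) (hV : ‖V‖ ≤ 1)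
    (hM : M = Q * Q * V) (X : Matrix n n ℂ) : ‖(M * X).trace‖ ≤ ‖X‖ * (Q * Q).trace.re := by
  have htr : (M * X).trace = ((Q * V * X) * Qᴴ).trace := by
    rw [hM, hQ, Matrix.mul_assoc Q, Matrix.mul_assoc, trace_mul_comm]
  have hQQ : 0 ≤ (Q * Q).trace.re := by
    simpa only [hQ] using re_trace_nonneg (posSemidef_self_mul_conjTranspose Q)
  have hV2 : ‖V‖ ^ 2 ≤ 1 := pow_le_one₀ (norm_nonneg V) hV
  have hA : ((Q * V * X) * (Q * V * X)ᴴ).trace.re ≤ ‖X‖ ^ 2 * (Q * Q).trace.re :=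
    calc ((Q * V * X) * (Q * V * X)ᴴ).trace.re
        = (Q * V * (X * Xᴴ) * (Q * V)ᴴ).trace.re := by
          simp only [conjTranspose_mul, Matrix.mul_assoc]
      _ ≤ ‖X‖ ^ 2 * (Q * V * (Q * V)ᴴ).trace.re :=
          re_trace_conj_mul_conjTranspose_le (Q * V) X
      _ = ‖X‖ ^ 2 * (Q * (V * Vᴴ) * Qᴴ).trace.re := by
          simp only [conjTranspose_mul, Matrix.mul_assoc]
      _ ≤ ‖X‖ ^ 2 * (‖V‖ ^ 2 * (Q * Qᴴ).trace.re) :=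
          mul_le_mul_of_nonneg_left (re_trace_conj_mul_conjTranspose_le Q V) (sq_nonneg _)
      _ ≤ ‖X‖ ^ 2 * (Q * Q).trace.re := by
          rw [hQ]
          exact mul_le_mul_of_nonneg_left (mul_le_of_le_one_left hQQ hV2) (sq_nonneg _)
  refine (pow_le_pow_iff_left₀ (norm_nonneg _) (by positivity) two_ne_zero).mp ?_
  calc ‖(M * X).trace‖ ^ 2
      ≤ ((Q * V * X) * (Q * V * X)ᴴ).trace.re * (Q * Qᴴ).trace.re := by
        rw [htr]; exact norm_trace_mul_conjTranspose_sq_le _ _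
    _ ≤ (‖X‖ ^ 2 * (Q * Q).trace.re) * (Q * Q).trace.re := by
        rw [hQ]; exact mul_le_mul_of_nonneg_right hA hQQ
    _ = (‖X‖ * (Q * Q).trace.re) ^ 2 := by ring

lemma norm_trace_mul_le (M X : Matrix n n ℂ) :
    ‖(M * X).trace‖ ≤ ‖X‖ * (CFC.sqrt (M * Mᴴ)).trace.re := by
  have hQ := CFC.sqrt_mul_sqrt_self _ (CFC.sqrt_nonneg (M * Mᴴ))
  rw [← hQ]
  refine norm_trace_mul_le_of_eq_mul ?_ (norm_polarIsometry_le_one M) ?_ X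
  · exact conjTranspose_sqrt _
  · rw [hQ, sqrt_mul_polarIsometry]

section Sandwich

variable {S : Matrix n n ℂ}

lemma trace_mul_mul_mul_conjTranspose_eq (hS : 0 ≤ S) (O W : Matrix n n ℂ) :
    (S * O * S * Wᴴ).trace =
      ((CFC.sqrt S * O * CFC.sqrt S) * (CFC.sqrt S * W * CFC.sqrt S)ᴴ).trace := by
  conv_lhs => rw [← CFC.sqrt_mul_sqrt_self S hS]
  simp only [conjTranspose_mul, conjTranspose_sqrt, ← Matrix.mul_assoc]
  rw [trace_mul_comm _ (CFC.sqrt S)]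
  simp only [← Matrix.mul_assoc]

lemma trace_mul_mul_mul_conjTranspose_nonneg (hS : 0 ≤ S) (O : Matrix n n ℂ) :
    0 ≤ (S * O * S * Oᴴ).trace := by
  rw [trace_mul_mul_mul_conjTranspose_eq hS]
  exact (posSemidef_self_mul_conjTranspose _).trace_nonneg

lemma re_trace_mul_mul_mul_conjTranspose_le (hS : 0 ≤ S) (V : Matrix n n ℂ) :
    (S * V * S * Vᴴ).trace.re ≤ ‖V‖ ^ 2 * (S * S).trace.re := by
  have hS' : Sᴴ = S := (nonneg_iff_posSemidef.mp hS).isHermitian.eq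
  have hSS : 0 ≤ (S * S).trace.re := by
    simpa only [hS'] using re_trace_nonneg (posSemidef_self_mul_conjTranspose S)
  have hleft : (S * V * (S * V)ᴴ).trace.re ≤ ‖V‖ ^ 2 * (S * S).trace.re := by
    simpa only [conjTranspose_mul, hS', Matrix.mul_assoc] using
      re_trace_conj_mul_conjTranspose_le S V
  have hright : (V * S * (V * S)ᴴ).trace.re ≤ ‖V‖ ^ 2 * (S * S).trace.re := by
    calc (V * S * (V * S)ᴴ).trace.re = ((S * Vᴴ * V) * S).trace.re := by
          rw [trace_mul_comm, conjTranspose_mul, hS']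
          simp only [Matrix.mul_assoc]
      _ ≤ ‖V‖ ^ 2 * (S * S).trace.re := by
          simpa only [l2_opNorm_conjTranspose, conjTranspose_conjTranspose, hS',
            Matrix.mul_assoc] using re_trace_conj_mul_conjTranspose_le S Vᴴ
  have hnorm : ‖(S * V * S * Vᴴ).trace‖ ≤ ‖V‖ ^ 2 * (S * S).trace.re := by
    refine (pow_le_pow_iff_left₀ (norm_nonneg _) (by positivity) two_ne_zero).mp ?_
    calc ‖(S * V * S * Vᴴ).trace‖ ^ 2 = ‖(S * V * (V * S)ᴴ).trace‖ ^ 2 := by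
          rw [conjTranspose_mul, hS', Matrix.mul_assoc (S * V)]
      _ ≤ (S * V * (S * V)ᴴ).trace.re * (V * S * (V * S)ᴴ).trace.re :=
          norm_trace_mul_conjTranspose_sq_le _ _
      _ ≤ (‖V‖ ^ 2 * (S * S).trace.re) ^ 2 := by
          rw [sq]
          exact mul_le_mul hleft hright (re_trace_nonneg (posSemidef_self_mul_conjTranspose _))
            (by positivity)
  exact (Complex.re_le_norm _).trans hnorm

lemma norm_trace_mul_mul_mul_conjTranspose_sq_le (hS : 0 ≤ S) (O V : Matrix n n ℂ) :
    ‖(S * O * S * Vᴴ).trace‖ ^ 2 ≤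
      ‖V‖ ^ 2 * (S * S).trace.re * (S * O * S * Oᴴ).trace.re := by
  have hR : 0 ≤ (S * O * S * Oᴴ).trace.re :=
    (Complex.nonneg_iff.mp (trace_mul_mul_mul_conjTranspose_nonneg hS O)).1
  calc ‖(S * O * S * Vᴴ).trace‖ ^ 2
      ≤ (S * O * S * Oᴴ).trace.re * (S * V * S * Vᴴ).trace.re := by
        simp only [trace_mul_mul_mul_conjTranspose_eq hS]
        exact norm_trace_mul_conjTranspose_sq_le _ _
    _ ≤ (S * O * S * Oᴴ).trace.re * (‖V‖ ^ 2 * (S * S).trace.re) :=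
        mul_le_mul_of_nonneg_left (re_trace_mul_mul_mul_conjTranspose_le hS V) hR
    _ = ‖V‖ ^ 2 * (S * S).trace.re * (S * O * S * Oᴴ).trace.re := by ring

end Sandwich

lemma fidelity_mul_mul_conjTranspose {ρ : Matrix n n ℂ} (hρ : ρ.PosSemidef) (O : Matrix n n ℂ) :
    fidelity ρ (O * ρ * Oᴴ) =
      (CFC.sqrt ((CFC.sqrt ρ * O * CFC.sqrt ρ) * (CFC.sqrt ρ * O * CFC.sqrt ρ)ᴴ)).trace.re := by
  have hM : CFC.sqrt ρ * (O * ρ * Oᴴ) * CFC.sqrt ρ =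
      (CFC.sqrt ρ * O * CFC.sqrt ρ) * (CFC.sqrt ρ * O * CFC.sqrt ρ)ᴴ := by
    simp only [conjTranspose_mul, conjTranspose_sqrt, Matrix.mul_assoc,
      ← Matrix.mul_assoc (CFC.sqrt ρ) (CFC.sqrt ρ), CFC.sqrt_mul_sqrt_self ρ hρ.nonneg]
  rw [fidelity, matSqrt_eq_sqrt hρ, hM, matSqrt_eq_sqrt (posSemidef_self_mul_conjTranspose _)]

end Matrix

open Matrix

/-- **Lemma (Rényi-1 vs fidelity, two-sided bound)**: the one-point Rényi-1 correlator
`R = tr(√ρ O √ρ O†)` is a nonnegative real number with `F² ≤ R ≤ ‖O‖∞ F`. -/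
theorem renyi1_fidelity_sandwich
    {n : Type*} [Fintype n] [DecidableEq n]
    (ρ : Matrix n n ℂ) (hρ : ρ.PosSemidef) (hρtr : ρ.trace = 1)
    (O : Matrix n n ℂ) :
    (matSqrt ρ * O * matSqrt ρ * Oᴴ).trace.im = 0 ∧
    0 ≤ (matSqrt ρ * O * matSqrt ρ * Oᴴ).trace.re ∧
    fidelity ρ (O * ρ * Oᴴ) ^ 2 ≤ (matSqrt ρ * O * matSqrt ρ * Oᴴ).trace.re ∧
    (matSqrt ρ * O * matSqrt ρ * Oᴴ).trace.re ≤ opNorm O * fidelity ρ (O * ρ * Oᴴ) := by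
  have hS := CFC.sqrt_nonneg ρ
  have hR := Complex.nonneg_iff.mp (trace_mul_mul_mul_conjTranspose_nonneg hS O)
  have hρ1 : (CFC.sqrt ρ * CFC.sqrt ρ).trace.re = 1 := by
    rw [CFC.sqrt_mul_sqrt_self ρ hρ.nonneg, hρtr, Complex.one_re]
  rw [matSqrt_eq_sqrt hρ, fidelity_mul_mul_conjTranspose hρ, opNorm_eq_norm]
  set M := CFC.sqrt ρ * O * CFC.sqrt ρ
  have hF := re_trace_nonneg (nonneg_iff_posSemidef.mp (CFC.sqrt_nonneg (M * Mᴴ)))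
  refine ⟨hR.2.symm, hR.1, ?_, ?_⟩
  · calc (CFC.sqrt (M * Mᴴ)).trace.re ^ 2 ≤ ‖(M * M.polarIsometryᴴ).trace‖ ^ 2 := by
          rw [mul_conjTranspose_polarIsometry]
          exact pow_le_pow_left₀ hF (Complex.re_le_norm _) 2
      _ ≤ ‖M.polarIsometry‖ ^ 2 * (CFC.sqrt ρ * CFC.sqrt ρ).trace.re * (M * Oᴴ).trace.re :=
          norm_trace_mul_mul_mul_conjTranspose_sq_le hS O _
      _ ≤ (M * Oᴴ).trace.re := by
          rw [hρ1, mul_one]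
          exact mul_le_of_le_one_left hR.1
            (pow_le_one₀ (norm_nonneg _) (norm_polarIsometry_le_one M))
  · calc (M * Oᴴ).trace.re ≤ ‖(M * Oᴴ).trace‖ := Complex.re_le_norm _
      _ ≤ ‖Oᴴ‖ * (CFC.sqrt (M * Mᴴ)).trace.re := norm_trace_mul_le M Oᴴ
      _ = ‖O‖ * (CFC.sqrt (M * Mᴴ)).trace.re := by rw [l2_opNorm_conjTranspose]
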